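/- Let X_1, ..., X_n be independent Bernoulli random variables with parameters p_i = E[X_i] and λ = Σ_{i=1}^n p_i, and let α_1, ..., α_n be i.i.d. random variables independent of the X_i with Pr(α_i = 1) = Pr(α_i = 2) = 1/2. Let S_n = Σ_{i=1}^n α_i X_i, and let CP(λ/2, λ/2) denote the distribution of Z_1 + 2 Z_2 where Z_1, Z_2 are independent Poisson(λ/2) random variables. Then D(P_{S_n} ‖ CP(λ/2, λ/2)) ≤ Σ_{i=1}^n p_i². -/

import Mathlib

/-!
The law of `αᵢ Xᵢ` is the compound Bernoulli law `(1 - pᵢ, pᵢ/2, pᵢ/2)` on `{0, 1, 2}`, and a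
direct computation gives `D(CBern(pᵢ) ‖ CP(pᵢ/2, pᵢ/2)) ≤ pᵢ²`. The laws `CP(a/2, a/2)` form a
convolution semigroup in `a`: their generating function is `exp (a (z + z²)/2 - a)`. Relative
entropy is subadditive under convolution, `D(f ∗ g ‖ F ∗ G) ≤ D(f ‖ F) + D(g ‖ G)`, by the log-sum
inequality applied on each antidiagonal `{(i, j) | i + j = k}`. Since `S_n` is a sum of
independent compound Bernoulli variables, the bound follows by induction on the number of summands.
-/

open MeasureTheory ProbabilityTheory Real Filter

/-- The distribution (probability mass function) of a random variable `X`,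
as a real-valued function: `distOf μ X a = μ(X = a)`. -/
noncomputable def distOf {Ω α : Type*} [MeasurableSpace Ω] (μ : Measure Ω) (X : Ω → α) (a : α) : ℝ :=
  (μ {ω | X ω = a}).toReal

/-- Relative entropy `D(P‖Q) = ∑ₓ P(x) log (P(x)/Q(x))` (natural logarithm). -/
noncomputable def relEnt {α : Type*} (P Q : α → ℝ) : ℝ :=
  ∑' x, P x * Real.log (P x / Q x)

/-- Shannon entropy `H(P) = -∑ₓ P(x) log P(x)` (natural logarithm). -/
noncomputable def entH {α : Type*} (P : α → ℝ) : ℝ :=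
  -∑' x, P x * Real.log (P x)

/-- The Poisson(l) probability mass function on ℕ. -/
noncomputable def poissonPMF (l : ℝ) (k : ℕ) : ℝ :=
  Real.exp (-l) * l ^ k / (Nat.factorial k)

/-- The scaled score function `ρ_X(x) = (x+1)P(x+1)/(λ P(x)) - 1`. -/
noncomputable def scaledScore (P : ℕ → ℝ) (l : ℝ) (x : ℕ) : ℝ :=
  ((x + 1 : ℕ) : ℝ) * P (x + 1) / (l * P x) - 1

/-- The scaled Fisher information `K(X) = λ E[ρ_X(X)²]`. -/
noncomputable def scaledFisher (P : ℕ → ℝ) (l : ℝ) : ℝ :=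
  l * ∑' x, P x * (scaledScore P l x) ^ 2

/-- Total variation distance `‖P - Q‖_TV = ∑ₓ |P(x) - Q(x)|`. -/
noncomputable def tvDist {α : Type*} (P Q : α → ℝ) : ℝ :=
  ∑' x, |P x - Q x|

/-- The compound Poisson distribution `CP(l/2, l/2)`: the law of `Z₁ + 2 Z₂`
where `Z₁, Z₂` are i.i.d. Poisson(l/2). -/
noncomputable def cpPMF (l : ℝ) (k : ℕ) : ℝ :=
  ∑' j : ℕ, if 2 * j ≤ k then poissonPMF (l / 2) (k - 2 * j) * poissonPMF (l / 2) j else 0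

open Finset Function

noncomputable def natConv (f g : ℕ → ℝ) (k : ℕ) : ℝ :=
  ∑ x ∈ antidiagonal k, f x.1 * g x.2

lemma coeff_mk_mul_mk (f g : ℕ → ℝ) (k : ℕ) :
    PowerSeries.coeff k (PowerSeries.mk f * PowerSeries.mk g) = natConv f g k := by
  simp [PowerSeries.coeff_mul, natConv]

lemma natConv_nonneg {f g : ℕ → ℝ} (hf : ∀ k, 0 ≤ f k) (hg : ∀ k, 0 ≤ g k) (k : ℕ) :
    0 ≤ natConv f g k :=
  sum_nonneg fun x _ => mul_nonneg (hf x.1) (hg x.2)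

lemma support_natConv_subset (f g : ℕ → ℝ) :
    (natConv f g).support ⊆ Set.image2 (· + ·) f.support g.support := by
  intro k hk
  obtain ⟨x, hx, hfg⟩ := exists_ne_zero_of_sum_ne_zero hk
  exact ⟨x.1, left_ne_zero_of_mul hfg, x.2, right_ne_zero_of_mul hfg, mem_antidiagonal.mp hx⟩

lemma finite_support_natConv {f g : ℕ → ℝ} (hf : f.support.Finite) (hg : g.support.Finite) :
    (natConv f g).support.Finite :=
  (hf.image2 _ hg).subset (support_natConv_subset f g)

lemma summable_norm_of_finite_support {f : ℕ → ℝ} (hf : f.support.Finite) :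
    Summable fun k => ‖f k‖ :=
  summable_of_hasFiniteSupport (by simpa [HasFiniteSupport, support] using hf)

lemma tsum_natConv {f g : ℕ → ℝ} (hf : f.support.Finite) (hg : g.support.Finite) :
    ∑' k, natConv f g k = (∑' k, f k) * ∑' k, g k :=
  (tsum_mul_tsum_eq_tsum_sum_antidiagonal_of_summable_norm
    (summable_norm_of_finite_support hf) (summable_norm_of_finite_support hg)).symm

lemma support_natConv_subset_support_natConv {f g F G : ℕ → ℝ}
    (hF : ∀ k, 0 ≤ F k) (hG : ∀ k, 0 ≤ G k)
    (hfF : f.support ⊆ F.support) (hgG : g.support ⊆ G.support) :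
    (natConv f g).support ⊆ (natConv F G).support := by
  intro k hk
  obtain ⟨x, hx, hfg⟩ := exists_ne_zero_of_sum_ne_zero hk
  have hFG : 0 < F x.1 * G x.2 :=
    mul_pos ((hF _).lt_of_ne' (hfF (left_ne_zero_of_mul hfg)))
      ((hG _).lt_of_ne' (hgG (right_ne_zero_of_mul hfg)))
  exact (hFG.trans_le (single_le_sum (f := fun y : ℕ × ℕ => F y.1 * G y.2)
    (fun y _ => mul_nonneg (hF y.1) (hG y.2)) hx)).ne'

structure IsFinitePMF (f : ℕ → ℝ) : Prop where
  nonneg : ∀ k, 0 ≤ f k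
  finite_support : f.support.Finite
  tsum_eq_one : ∑' k, f k = 1

lemma IsFinitePMF.natConv {f g : ℕ → ℝ} (hf : IsFinitePMF f) (hg : IsFinitePMF g) :
    IsFinitePMF (natConv f g) where
  nonneg := natConv_nonneg hf.nonneg hg.nonneg
  finite_support := finite_support_natConv hf.finite_support hg.finite_support
  tsum_eq_one := by
    rw [tsum_natConv hf.finite_support hg.finite_support, hf.tsum_eq_one, hg.tsum_eq_one,
      one_mul]

lemma mul_sub_mul_le_mul_log_div_sub {a b c : ℝ} (ha : 0 ≤ a) (hb : 0 ≤ b) (hab : b = 0 → a = 0)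
    (hc : 0 < c) : a - c * b ≤ a * log (a / b) - a * log c := by
  rcases ha.eq_or_lt with rfl | ha
  · simpa using mul_nonneg hc.le hb
  have hb : 0 < b := hb.lt_of_ne' fun h => ha.ne' (hab h)
  have key := Real.one_sub_inv_le_log_of_pos (show 0 < a / b / c by positivity)
  rw [log_div (by positivity) hc.ne'] at key
  have : a * (1 - (a / b / c)⁻¹) = a - c * b := by field_simp
  nlinarith

/-- The log-sum inequality. -/
lemma sum_mul_log_sum_div_sum_le {ι : Type*} (s : Finset ι) {a b : ι → ℝ}
    (ha : ∀ i ∈ s, 0 ≤ a i) (hb : ∀ i ∈ s, 0 ≤ b i) (hab : ∀ i ∈ s, b i = 0 → a i = 0) :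
    (∑ i ∈ s, a i) * log ((∑ i ∈ s, a i) / ∑ i ∈ s, b i) ≤ ∑ i ∈ s, a i * log (a i / b i) := by
  rcases (sum_nonneg ha).eq_or_lt with hA | hA
  · rw [← hA, zero_mul]
    refine sum_nonneg fun i hi => ?_
    rw [(sum_eq_zero_iff_of_nonneg ha).mp hA.symm i hi, zero_mul]
  have hB : 0 < ∑ i ∈ s, b i := by
    refine (sum_nonneg hb).lt_of_ne' fun hB => hA.ne' (sum_eq_zero fun i hi => hab i hi ?_)
    exact (sum_eq_zero_iff_of_nonneg hb).mp hB i hi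
  have key := sum_le_sum fun i hi =>
    mul_sub_mul_le_mul_log_div_sub (ha i hi) (hb i hi) (hab i hi) (div_pos hA hB)
  rw [sum_sub_distrib, ← mul_sum, sum_sub_distrib, ← sum_mul] at key
  have : ∑ i ∈ s, a i - (∑ i ∈ s, a i) / (∑ i ∈ s, b i) * ∑ i ∈ s, b i = 0 := by
    field_simp; ring
  linarith

lemma mul_log_mul_div_mul {a b A B : ℝ} (ha : A = 0 → a = 0) (hb : B = 0 → b = 0) :
    a * b * log (a * b / (A * B)) = a * log (a / A) * b + a * (b * log (b / B)) := by
  rcases eq_or_ne a 0 with rfl | ha0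
  · simp
  rcases eq_or_ne b 0 with rfl | hb0
  · simp
  rw [mul_div_mul_comm, log_mul (div_ne_zero ha0 (mt ha ha0)) (div_ne_zero hb0 (mt hb hb0))]
  ring

lemma mul_log_natConv_le {f g F G : ℕ → ℝ} (hf : ∀ k, 0 ≤ f k) (hg : ∀ k, 0 ≤ g k)
    (hF : ∀ k, 0 ≤ F k) (hG : ∀ k, 0 ≤ G k)
    (hfF : f.support ⊆ F.support) (hgG : g.support ⊆ G.support) (k : ℕ) :
    natConv f g k * log (natConv f g k / natConv F G k)
      ≤ natConv (fun i => f i * log (f i / F i)) g k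
        + natConv f (fun j => g j * log (g j / G j)) k := by
  have hfF' : ∀ i, F i = 0 → f i = 0 := fun i => not_imp_not.mp (@hfF i)
  have hgG' : ∀ j, G j = 0 → g j = 0 := fun j => not_imp_not.mp (@hgG j)
  calc natConv f g k * log (natConv f g k / natConv F G k)
      ≤ ∑ x ∈ antidiagonal k, f x.1 * g x.2 * log (f x.1 * g x.2 / (F x.1 * G x.2)) :=
        sum_mul_log_sum_div_sum_le _ (fun x _ => mul_nonneg (hf _) (hg _))
          (fun x _ => mul_nonneg (hF _) (hG _)) fun x _ hx => by
            rcases mul_eq_zero.mp hx with h | h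
            · simp [hfF' _ h]
            · simp [hgG' _ h]
    _ = _ := by
        simp only [mul_log_mul_div_mul (hfF' _) (hgG' _), sum_add_distrib, natConv]

lemma relEnt_natConv_le {f g F G : ℕ → ℝ} (hf : IsFinitePMF f) (hg : IsFinitePMF g)
    (hF : ∀ k, 0 ≤ F k) (hG : ∀ k, 0 ≤ G k)
    (hfF : f.support ⊆ F.support) (hgG : g.support ⊆ G.support) :
    relEnt (natConv f g) (natConv F G) ≤ relEnt f F + relEnt g G := by
  have hfL : (fun i => f i * log (f i / F i)).support.Finite :=
    hf.finite_support.subset (support_mul_subset_left _ _)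
  have hgL : (fun j => g j * log (g j / G j)).support.Finite :=
    hg.finite_support.subset (support_mul_subset_left _ _)
  have hfg := finite_support_natConv hf.finite_support hg.finite_support
  have hsum₁ : Summable (natConv (fun i => f i * log (f i / F i)) g) :=
    summable_of_hasFiniteSupport (finite_support_natConv hfL hg.finite_support)
  have hsum₂ : Summable (natConv f fun j => g j * log (g j / G j)) :=
    summable_of_hasFiniteSupport (finite_support_natConv hf.finite_support hgL)
  calc relEnt (natConv f g) (natConv F G)
      ≤ ∑' k, (natConv (fun i => f i * log (f i / F i)) g k
          + natConv f (fun j => g j * log (g j / G j)) k) :=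
        Summable.tsum_le_tsum (mul_log_natConv_le hf.nonneg hg.nonneg hF hG hfF hgG)
          (summable_of_hasFiniteSupport (hfg.subset (support_mul_subset_left _ _)))
          (hsum₁.add hsum₂)
    _ = relEnt f F + relEnt g G := by
        rw [hsum₁.tsum_add hsum₂, tsum_natConv hfL hg.finite_support,
          tsum_natConv hf.finite_support hgL, hf.tsum_eq_one, hg.tsum_eq_one, mul_one, one_mul,
          relEnt, relEnt]

lemma mk_poissonPMF (l : ℝ) :
    PowerSeries.mk (_root_.poissonPMF l)
      = PowerSeries.C (exp (-l)) * PowerSeries.rescale l (PowerSeries.exp ℝ) := by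
  ext k
  simp [_root_.poissonPMF, PowerSeries.coeff_C_mul, div_eq_mul_inv, mul_assoc]

lemma mk_poissonPMF_mul (a b : ℝ) :
    PowerSeries.mk (_root_.poissonPMF a) * PowerSeries.mk (_root_.poissonPMF b)
      = PowerSeries.mk (_root_.poissonPMF (a + b)) := by
  rw [mk_poissonPMF, mk_poissonPMF, mk_poissonPMF, ← PowerSeries.exp_mul_exp_eq_exp_add,
    neg_add, exp_add, map_mul]
  ring

lemma coeff_mk_mul_expand_two (f g : ℕ → ℝ) (k : ℕ) :
    PowerSeries.coeff k (PowerSeries.mk f * PowerSeries.expand 2 two_ne_zero (PowerSeries.mk g))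
      = ∑ j ∈ range (k / 2 + 1), f (k - 2 * j) * g j := by
  rw [PowerSeries.coeff_mul]
  simp only [PowerSeries.coeff_expand, PowerSeries.coeff_mk, mul_ite, mul_zero]
  rw [← sum_filter]
  refine (sum_nbij' (fun j => (k - 2 * j, 2 * j)) (fun x => x.2 / 2) ?_ ?_ ?_ ?_ ?_).symm
  · intro j hj
    simp only [mem_filter, HasAntidiagonal.mem_antidiagonal, mem_range] at hj ⊢
    omega
  · intro x hx
    simp only [mem_filter, HasAntidiagonal.mem_antidiagonal, mem_range] at hx ⊢
    omega
  · intro j _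
    simp
  · intro x hx
    simp only [mem_filter, HasAntidiagonal.mem_antidiagonal] at hx
    ext <;> simp <;> omega
  · intro j _
    simp

lemma cpPMF_eq_sum (l : ℝ) (k : ℕ) :
    cpPMF l k = ∑ j ∈ range (k / 2 + 1),
      _root_.poissonPMF (l / 2) (k - 2 * j) * _root_.poissonPMF (l / 2) j := by
  rw [cpPMF, tsum_eq_sum (s := range (k / 2 + 1)) fun j hj => if_neg (by simp at hj; omega)]
  exact sum_congr rfl fun j hj => if_pos (by simp at hj; omega)

lemma mk_cpPMF (l : ℝ) :
    PowerSeries.mk (cpPMF l) = PowerSeries.mk (_root_.poissonPMF (l / 2))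
      * PowerSeries.expand 2 two_ne_zero (PowerSeries.mk (_root_.poissonPMF (l / 2))) := by
  ext k
  rw [PowerSeries.coeff_mk, coeff_mk_mul_expand_two, cpPMF_eq_sum]

lemma natConv_cpPMF (a b : ℝ) : natConv (cpPMF a) (cpPMF b) = cpPMF (a + b) := by
  ext k
  rw [← coeff_mk_mul_mk, ← PowerSeries.coeff_mk k (cpPMF (a + b)), mk_cpPMF, mk_cpPMF, mk_cpPMF,
    add_div, ← mk_poissonPMF_mul, map_mul (PowerSeries.expand 2 two_ne_zero)]
  ring_nf

lemma cpPMF_zero_left : cpPMF 0 = fun k => if k = 0 then 1 else 0 := by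
  ext k
  rw [← PowerSeries.coeff_mk k (cpPMF 0), mk_cpPMF, zero_div, mk_poissonPMF,
    PowerSeries.rescale_zero]
  simp [PowerSeries.coeff_one]

lemma cpPMF_nonneg {l : ℝ} (hl : 0 ≤ l) (k : ℕ) : 0 ≤ cpPMF l k := by
  rw [cpPMF_eq_sum]
  exact sum_nonneg fun j _ => by unfold _root_.poissonPMF; positivity

lemma exp_neg_half_mul_exp_neg_half (l : ℝ) : exp (-(l / 2)) * exp (-(l / 2)) = exp (-l) := by
  rw [← exp_add]; ring_nf

lemma cpPMF_apply_zero (l : ℝ) : cpPMF l 0 = exp (-l) := by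
  simp [cpPMF_eq_sum, _root_.poissonPMF, exp_neg_half_mul_exp_neg_half]

lemma cpPMF_apply_one (l : ℝ) : cpPMF l 1 = exp (-l) * (l / 2) := by
  norm_num [cpPMF_eq_sum, _root_.poissonPMF]
  rw [← exp_neg_half_mul_exp_neg_half l]
  ring

lemma cpPMF_apply_two (l : ℝ) : cpPMF l 2 = exp (-l) * (l / 2 + l ^ 2 / 8) := by
  norm_num [cpPMF_eq_sum, sum_range_succ, _root_.poissonPMF]
  rw [← exp_neg_half_mul_exp_neg_half l]
  ring

/-- The compound Bernoulli law of `α X` with `X ~ Bernoulli(p)` and `α` uniform on `{1, 2}`. -/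
noncomputable def cbernPMF (p : ℝ) : ℕ → ℝ
  | 0 => 1 - p
  | 1 => p / 2
  | 2 => p / 2
  | _ => 0

lemma tsum_cbernPMF_mul (p : ℝ) (h : ℕ → ℝ) :
    ∑' k, cbernPMF p k * h k = (1 - p) * h 0 + p / 2 * h 1 + p / 2 * h 2 := by
  rw [tsum_eq_sum (s := range 3) fun k hk => ?_]
  · simp [sum_range_succ, cbernPMF]
  · match k, hk with
    | k + 3, _ => simp [cbernPMF]

lemma isFinitePMF_cbernPMF {p : ℝ} (hp0 : 0 ≤ p) (hp1 : p ≤ 1) : IsFinitePMF (cbernPMF p) where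
  nonneg
    | 0 => sub_nonneg.mpr hp1
    | 1 | 2 => by simp only [cbernPMF]; positivity
    | _ + 3 => le_rfl
  finite_support := (Set.finite_Iio 3).subset fun
    | 0, _ | 1, _ | 2, _ => by simp
    | _ + 3, h => absurd rfl h
  tsum_eq_one := by simpa using (tsum_cbernPMF_mul p fun _ => 1).trans (by ring)

lemma support_cbernPMF_subset {p : ℝ} (hp0 : 0 ≤ p) :
    (cbernPMF p).support ⊆ (cpPMF p).support := by
  rintro (_ | _ | _ | k) hk
  · simp [cpPMF_apply_zero, exp_ne_zero]
  · have hp : p ≠ 0 := by simpa [cbernPMF] using hk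
    simp [cpPMF_apply_one, exp_ne_zero, hp]
  · have hp : 0 < p := hp0.lt_of_ne' (by simpa [cbernPMF] using hk)
    show cpPMF p 2 ≠ 0
    rw [cpPMF_apply_two]
    positivity
  · exact absurd rfl hk

lemma relEnt_cbernPMF_cpPMF_le {p : ℝ} (hp0 : 0 ≤ p) (hp1 : p ≤ 1) :
    relEnt (cbernPMF p) (cpPMF p) ≤ p ^ 2 := by
  rw [relEnt, tsum_cbernPMF_mul, cpPMF_apply_zero, cpPMF_apply_one, cpPMF_apply_two]
  simp only [cbernPMF]
  have h0 : (1 - p) * log ((1 - p) / exp (-p)) ≤ 0 := by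
    refine mul_nonpos_of_nonneg_of_nonpos (by linarith) (log_nonpos (by positivity) ?_)
    rw [div_le_one (exp_pos _)]
    linarith [add_one_le_exp (-p)]
  -- `CP(p/2, p/2)` gives both `1` and `2` a mass of at least `exp (-p) * (p / 2)`.
  have hle : ∀ c, p / 2 ≤ c → p / 2 * log (p / 2 / (exp (-p) * c)) ≤ p / 2 * p := by
    intro c hc
    rcases hp0.eq_or_lt with rfl | hp
    · simp
    have hc : 0 < c := by linarith
    refine mul_le_mul_of_nonneg_left ?_ (by positivity)
    calc log (p / 2 / (exp (-p) * c)) ≤ log (p / 2 / (exp (-p) * (p / 2))) :=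
          log_le_log (by positivity) (by gcongr)
      _ = p := by rw [mul_comm, ← div_div, div_self (by positivity), one_div, ← exp_neg, neg_neg,
            log_exp]
  nlinarith [hle (p / 2) le_rfl, hle (p / 2 + p ^ 2 / 8) (by nlinarith)]

section Laws

variable {Ω : Type*} [MeasurableSpace Ω] {μ : Measure Ω}

lemma distOf_add_of_indepFun [IsFiniteMeasure μ] {U V : Ω → ℕ} (hU : Measurable U)
    (hV : Measurable V) (hUV : IndepFun U V μ) :
    distOf μ (fun ω => U ω + V ω) = natConv (distOf μ U) (distOf μ V) := by
  ext k
  have hfiber : {ω | U ω + V ω = k} = ⋃ x ∈ antidiagonal k, U ⁻¹' {x.1} ∩ V ⁻¹' {x.2} := by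
    ext ω
    simp
  have hdisj : (antidiagonal k : Set (ℕ × ℕ)).PairwiseDisjoint
      fun x => U ⁻¹' {x.1} ∩ V ⁻¹' {x.2} := by
    intro x hx y hy hxy
    refine Set.disjoint_left.mpr fun ω hωx hωy => hxy ?_
    have := HasAntidiagonal.mem_antidiagonal.mp hx
    have := HasAntidiagonal.mem_antidiagonal.mp hy
    ext <;> simp_all
  simp only [distOf, natConv, hfiber]
  rw [measure_biUnion_finset hdisj fun x _ =>
      (hU (measurableSet_singleton _)).inter (hV (measurableSet_singleton _)),
    ENNReal.toReal_sum fun x _ => measure_ne_top μ _]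
  refine sum_congr rfl fun x _ => ?_
  rw [hUV.measure_inter_preimage_eq_mul _ _ (measurableSet_singleton _)
    (measurableSet_singleton _), ENNReal.toReal_mul]
  rfl

lemma distOf_mul_of_ne_zero {A X : Ω → ℕ} (hX1 : ∀ ω, X ω ≤ 1) (hAX : IndepFun A X μ) {k : ℕ}
    (hk : k ≠ 0) :
    distOf μ (fun ω => A ω * X ω) k = distOf μ A k * distOf μ X 1 := by
  have hfiber : {ω | A ω * X ω = k} = A ⁻¹' {k} ∩ X ⁻¹' {1} := by
    ext ω
    rcases Nat.le_one_iff_eq_zero_or_eq_one.mp (hX1 ω) with h | h <;> simp [h, hk.symm]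
  simp only [distOf, hfiber]
  rw [hAX.measure_inter_preimage_eq_mul _ _ (measurableSet_singleton _)
    (measurableSet_singleton _), ENNReal.toReal_mul]
  rfl

lemma distOf_mul_zero {A X : Ω → ℕ} (hA0 : μ {ω | A ω = 0} = 0) :
    distOf μ (fun ω => A ω * X ω) 0 = distOf μ X 0 := by
  have hfiber : {ω | A ω * X ω = 0} = {ω | X ω = 0} ∪ {ω | A ω = 0} := by
    ext ω
    simp [or_comm]
  rw [distOf, hfiber, measure_congr (union_ae_eq_left_of_ae_eq_empty (ae_eq_empty.mpr hA0))]
  rfl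

lemma distOf_zero_of_le_one [IsProbabilityMeasure μ] {X : Ω → ℕ} (hX : Measurable X)
    (hX1 : ∀ ω, X ω ≤ 1) : distOf μ X 0 = 1 - distOf μ X 1 := by
  have hfiber : {ω | X ω = 0} = (X ⁻¹' {1})ᶜ := by
    ext ω
    have := hX1 ω
    simp only [Set.mem_ofPred_eq, Set.mem_compl_iff, Set.mem_preimage, Set.mem_singleton_iff]
    omega
  rw [distOf, hfiber, ← measureReal_def,
    probReal_compl_eq_one_sub (hX (measurableSet_singleton 1))]
  rfl

lemma integral_eq_distOf_one [IsFiniteMeasure μ] {X : Ω → ℕ} (hX : Measurable X)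
    (hX1 : ∀ ω, X ω ≤ 1) : ∫ ω, (X ω : ℝ) ∂μ = distOf μ X 1 := by
  have hind : (fun ω => (X ω : ℝ)) = (X ⁻¹' {1}).indicator 1 := by
    ext ω
    rcases Nat.le_one_iff_eq_zero_or_eq_one.mp (hX1 ω) with h | h <;> simp [h]
  rw [hind, integral_indicator_one (hX (measurableSet_singleton 1))]
  rfl

lemma distOf_mul_eq_cbernPMF [IsProbabilityMeasure μ] {A X : Ω → ℕ} (hX : Measurable X)
    (hX1 : ∀ ω, X ω ≤ 1) (hAX : IndepFun A X μ)
    (hA : ∀ k, distOf μ A k = if k = 1 then (1 : ℝ) / 2 else if k = 2 then 1 / 2 else 0) :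
    distOf μ (fun ω => A ω * X ω) = cbernPMF (distOf μ X 1) := by
  ext k
  rcases eq_or_ne k 0 with rfl | hk
  · have hA0 : μ {ω | A ω = 0} = 0 := by
      simpa [distOf, ENNReal.toReal_eq_zero_iff, measure_ne_top] using hA 0
    rw [distOf_mul_zero hA0, distOf_zero_of_le_one hX hX1]
    rfl
  rw [distOf_mul_of_ne_zero hX1 hAX hk, hA]
  match k, hk with
  | 1, _ | 2, _ => simp only [cbernPMF]; norm_num; ring
  | k + 3, _ => simp [cbernPMF]

lemma distOf_le_one {α : Type*} [IsProbabilityMeasure μ] (X : Ω → α) (a : α) : distOf μ X a ≤ 1 :=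
  ENNReal.toReal_le_of_le_ofReal zero_le_one (prob_le_one.trans ENNReal.ofReal_one.ge)

lemma indepFun_mul_finsetSum_mul {ι : Type*} {X A : ι → Ω → ℕ} (hX : ∀ i, Measurable (X i))
    (hA : ∀ i, Measurable (A i)) (h : iIndepFun (Sum.elim X A) μ) {a : ι} {s : Finset ι}
    (ha : a ∉ s) :
    IndepFun (fun ω => A a ω * X a ω) (fun ω => ∑ i ∈ s, A i ω * X i ω) μ := by
  have hdisj : Disjoint (({a} : Finset ι).disjSum {a}) (s.disjSum s) := by
    rw [Finset.disjoint_left]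
    rintro (i | i) <;> simp +contextual [ha]
  have hmeas : ∀ i, Measurable (Sum.elim X A i) := fun
    | .inl i => hX i
    | .inr i => hA i
  have hpair := h.indepFun_finset _ _ hdisj hmeas
  have hφ : Measurable fun v : ({a} : Finset ι).disjSum {a} → ℕ =>
      v ⟨.inr a, by simp⟩ * v ⟨.inl a, by simp⟩ := by fun_prop
  have hψ : Measurable fun v : s.disjSum s → ℕ =>
      ∑ j ∈ s.attach, v ⟨.inr j, by simp⟩ * v ⟨.inl j, by simp⟩ := by fun_prop
  convert hpair.comp hφ hψ using 1
  · rfl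
  · ext ω
    exact (sum_attach s fun i => A i ω * X i ω).symm

end Laws

section Tensorization

variable {Ω ι : Type*} [MeasurableSpace Ω] {μ : Measure Ω} [IsProbabilityMeasure μ]
  {W : ι → Ω → ℕ} {q : ι → ℝ}

lemma distOf_finsetSum_empty :
    distOf μ (fun ω => ∑ i ∈ (∅ : Finset ι), W i ω) = fun k => if k = 0 then 1 else 0 := by
  ext k
  rcases eq_or_ne k 0 with rfl | hk <;> simp [distOf, *, eq_comm]

lemma distOf_finsetSum_insert [DecidableEq ι] (hW : ∀ i, Measurable (W i)) {a : ι} {s : Finset ι}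
    (ha : a ∉ s) (hindep : IndepFun (W a) (fun ω => ∑ i ∈ s, W i ω) μ) :
    distOf μ (fun ω => ∑ i ∈ insert a s, W i ω)
      = natConv (distOf μ (W a)) (distOf μ fun ω => ∑ i ∈ s, W i ω) := by
  simp_rw [sum_insert ha]
  exact distOf_add_of_indepFun (hW a) (s.measurable_sum fun i _ => hW i) hindep

lemma cpPMF_finsetSum_insert [DecidableEq ι] {a : ι} {s : Finset ι} (ha : a ∉ s) :
    cpPMF (∑ i ∈ insert a s, q i) = natConv (cpPMF (q a)) (cpPMF (∑ i ∈ s, q i)) := by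
  rw [sum_insert ha, natConv_cpPMF]

lemma isFinitePMF_distOf_finsetSum [DecidableEq ι] (hW : ∀ i, Measurable (W i))
    (hindep : ∀ a s, a ∉ s → IndepFun (W a) (fun ω => ∑ i ∈ s, W i ω) μ)
    (hlaw : ∀ i, IsFinitePMF (distOf μ (W i))) (s : Finset ι) :
    IsFinitePMF (distOf μ fun ω => ∑ i ∈ s, W i ω) := by
  induction s using Finset.induction_on with
  | empty =>
    rw [distOf_finsetSum_empty]
    exact ⟨fun k => by positivity,
      (Set.finite_singleton 0).subset fun k hk => by simpa using hk, by simp⟩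
  | insert a s ha ih =>
    rw [distOf_finsetSum_insert hW ha (hindep a s ha)]
    exact (hlaw a).natConv ih

lemma support_distOf_finsetSum_subset [DecidableEq ι] (hW : ∀ i, Measurable (W i))
    (hindep : ∀ a s, a ∉ s → IndepFun (W a) (fun ω => ∑ i ∈ s, W i ω) μ) (hq : ∀ i, 0 ≤ q i)
    (hsupp : ∀ i, (distOf μ (W i)).support ⊆ (cpPMF (q i)).support) (s : Finset ι) :
    (distOf μ fun ω => ∑ i ∈ s, W i ω).support ⊆ (cpPMF (∑ i ∈ s, q i)).support := by
  induction s using Finset.induction_on with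
  | empty =>
    rw [distOf_finsetSum_empty, sum_empty, cpPMF_zero_left]
  | insert a s ha ih =>
    rw [distOf_finsetSum_insert hW ha (hindep a s ha), cpPMF_finsetSum_insert ha]
    exact support_natConv_subset_support_natConv (cpPMF_nonneg (hq a))
      (cpPMF_nonneg (sum_nonneg fun i _ => hq i)) (hsupp a) ih

lemma relEnt_distOf_finsetSum_le [DecidableEq ι] (hW : ∀ i, Measurable (W i))
    (hindep : ∀ a s, a ∉ s → IndepFun (W a) (fun ω => ∑ i ∈ s, W i ω) μ) (hq : ∀ i, 0 ≤ q i)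
    (hlaw : ∀ i, IsFinitePMF (distOf μ (W i)))
    (hsupp : ∀ i, (distOf μ (W i)).support ⊆ (cpPMF (q i)).support) (s : Finset ι) :
    relEnt (distOf μ fun ω => ∑ i ∈ s, W i ω) (cpPMF (∑ i ∈ s, q i))
      ≤ ∑ i ∈ s, relEnt (distOf μ (W i)) (cpPMF (q i)) := by
  induction s using Finset.induction_on with
  | empty =>
    rw [distOf_finsetSum_empty, sum_empty, cpPMF_zero_left]
    simp [relEnt, apply_ite]
  | insert a s ha ih =>
    rw [distOf_finsetSum_insert hW ha (hindep a s ha), cpPMF_finsetSum_insert ha, sum_insert ha]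
    exact (relEnt_natConv_le (hlaw a) (isFinitePMF_distOf_finsetSum hW hindep hlaw s)
      (cpPMF_nonneg (hq a)) (cpPMF_nonneg (sum_nonneg fun i _ => hq i)) (hsupp a)
      (support_distOf_finsetSum_subset hW hindep hq hsupp s)).trans (add_le_add le_rfl ih)

end Tensorization

/-- The compound Poisson approximation example: if `X₁,…,X_n` are independent Bernoulli(pᵢ)
variables, `α₁,…,α_n` are i.i.d. uniform on `{1,2}` and independent of the `Xᵢ`, and
`S_n = ∑ᵢ αᵢ Xᵢ`, then `D(P_{S_n} ‖ CP(λ/2, λ/2)) ≤ ∑ᵢ pᵢ²` where `λ = ∑ᵢ pᵢ`. -/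
theorem compound_poisson_approx {Ω : Type*} [MeasurableSpace Ω]
    (μ : Measure Ω) [IsProbabilityMeasure μ]
    (n : ℕ) (X A : Fin n → Ω → ℕ)
    (hXmeas : ∀ i, Measurable (X i)) (hAmeas : ∀ i, Measurable (A i))
    (hbin : ∀ i ω, X i ω ≤ 1)
    (hindep : iIndepFun (Sum.elim X A) μ)
    (hA : ∀ i k, distOf μ (A i) k = if k = 1 then (1 : ℝ) / 2 else if k = 2 then 1 / 2 else 0)
    (p : Fin n → ℝ) (hp : ∀ i, ∫ ω, (X i ω : ℝ) ∂μ = p i)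
    (lam : ℝ) (hlam : ∑ i, p i = lam) :
    relEnt (distOf μ (fun ω => ∑ i, A i ω * X i ω)) (cpPMF lam) ≤ ∑ i, (p i) ^ 2 := by
  have hpX (i : Fin n) : distOf μ (X i) 1 = p i :=
    (integral_eq_distOf_one (hXmeas i) (hbin i)).symm.trans (hp i)
  have hp0 (i : Fin n) : 0 ≤ p i := hpX i ▸ ENNReal.toReal_nonneg
  have hp1 (i : Fin n) : p i ≤ 1 := hpX i ▸ distOf_le_one _ _
  have hlaw (i : Fin n) : distOf μ (fun ω => A i ω * X i ω) = cbernPMF (p i) := by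
    rw [← hpX]
    exact distOf_mul_eq_cbernPMF (hXmeas i) (hbin i)
      (hindep.indepFun (i := .inr i) (j := .inl i) (by simp)) (hA i)
  calc relEnt (distOf μ (fun ω => ∑ i, A i ω * X i ω)) (cpPMF lam)
      ≤ ∑ i, relEnt (distOf μ fun ω => A i ω * X i ω) (cpPMF (p i)) := by
        rw [← hlam]
        refine relEnt_distOf_finsetSum_le (fun i => (hAmeas i).mul (hXmeas i))
          (fun a s ha => indepFun_mul_finsetSum_mul hXmeas hAmeas hindep ha) hp0
          (fun i => hlaw i ▸ isFinitePMF_cbernPMF (hp0 i) (hp1 i))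
          (fun i => hlaw i ▸ support_cbernPMF_subset (hp0 i)) univ
    _ ≤ ∑ i, p i ^ 2 :=
        sum_le_sum fun i _ => hlaw i ▸ relEnt_cbernPMF_cpPMF_le (hp0 i) (hp1 i)
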